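/- Let an edge-weighted graph (V, E) with weights w_e > 0 be given and consider the associated single-activity budget contest game (the PLS-reduction construction). Then in every pure-strategy Nash equilibrium of this game, the map sending each vertex contest to the unique player producing output along one of its two associated activities is a bijection between V and the set of players; i.e., no two players produce output along the pair of activities of the same vertex. -/
import Mathlib


open Finset

noncomputable section MaxCutGame

variable {V : Type*} [Fintype V] [DecidableEq V]

/-- total edge weight -/
def totalW (E : Finset (Sym2 V)) (w : Sym2 V → ℝ) : ℝ := ∑ e ∈ E, w e

/-- winners of the vertex contest of `u`: players producing output along `α_u` or `β_u`,
i.e. players whose chosen activity-pair is the one of vertex `u` -/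
def vWinners (s : V → V × Bool) (u : V) : Finset V :=
  univ.filter (fun i => (s i).1 = u)

/-- winners of the edge contest of edge `e` on side `side` (`true` for the `α`-copy,
`false` for the `β`-copy) -/
def eWinners (s : V → V × Bool) (e : Sym2 V) (side : Bool) : Finset V :=
  univ.filter (fun i => (s i).1 ∈ e ∧ (s i).2 = side)

/-- utility of player `i`: equal share of the big vertex prize `4·Σ w + 2` of the vertex
they play, plus equal shares of the edge prizes `w e` they win -/
def mcUtil (E : Finset (Sym2 V)) (w : Sym2 V → ℝ) (s : V → V × Bool) (i : V) : ℝ :=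
  (4 * totalW E w + 2) / ((vWinners s (s i).1).card : ℝ)
  + ∑ e ∈ E, ∑ side : Bool,
      if i ∈ eWinners s e side then w e / ((eWinners s e side).card : ℝ) else 0

/-- In every pure-strategy Nash equilibrium of the max-cut reduction game, the map sending
each player to the vertex whose activity-pair they play is a bijection: no two players
produce output along the pair of activities of the same vertex. -/
theorem pne_vertex_bijective
    (E : Finset (Sym2 V)) (w : Sym2 V → ℝ)
    (hE : ∀ e ∈ E, ¬ e.IsDiag) (hw : ∀ e ∈ E, 0 < w e)
    (s : V → V × Bool)
    (hNE : ∀ i : V, ∀ a : V × Bool,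
      mcUtil E w (Function.update s i a) i ≤ mcUtil E w s i) :
    Function.Bijective (fun i : V => (s i).1) := by
  classical
  have hW : 0 ≤ totalW E w := Finset.sum_nonneg fun e he => (hw e he).le
  have hinj : Function.Injective (fun i : V => (s i).1) := by
    by_contra hni
    obtain ⟨i, j, hij, hne⟩ := Function.not_injective_iff.mp hni
    have hnsurj : ¬ Function.Surjective (fun i : V => (s i).1) :=
      fun hs => hni (Finite.injective_iff_surjective.mpr hs)
    obtain ⟨u, hu⟩ : ∃ u : V, ∀ k, (s k).1 ≠ u := by
      simpa [Function.Surjective, eq_comm] using hnsurj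
    set s' := Function.update s i (u, true) with hs'
    have hv : vWinners s' u = {i} := by
      ext k
      simp only [vWinners, mem_filter, mem_univ, true_and, mem_singleton]
      constructor
      · intro hk
        by_contra hki
        rw [hs', Function.update_of_ne hki] at hk
        exact hu k hk
      · rintro rfl
        simp [hs']
    -- lower bound on deviation utility
    have hlow : 4 * totalW E w + 2 ≤ mcUtil E w s' i := by
      have h1 : (s' i).1 = u := by simp [hs']
      have hnn : (0:ℝ) ≤ ∑ e ∈ E, ∑ side : Bool,
          (if i ∈ eWinners s' e side then w e / ((eWinners s' e side).card : ℝ) else 0) := by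
        refine Finset.sum_nonneg fun e he => Finset.sum_nonneg fun side _ => ?_
        split
        · exact div_nonneg (hw e he).le (Nat.cast_nonneg _)
        · exact le_refl 0
      have : mcUtil E w s' i = (4 * totalW E w + 2) / 1 + ∑ e ∈ E, ∑ side : Bool,
          (if i ∈ eWinners s' e side then w e / ((eWinners s' e side).card : ℝ) else 0) := by
        rw [mcUtil, h1, hv]
        simp
      rw [this]
      rw [div_one]
      linarith
    -- upper bound on current utility
    have hcard2 : (2:ℝ) ≤ ((vWinners s (s i).1).card : ℝ) := by
      have hsub : ({i, j} : Finset V) ⊆ vWinners s (s i).1 := by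
        intro k hk
        simp only [mem_insert, mem_singleton] at hk
        rcases hk with rfl | rfl
        · simp [vWinners]
        · simp [vWinners, hij.symm]
      have : ({i, j} : Finset V).card ≤ (vWinners s (s i).1).card :=
        Finset.card_le_card hsub
      have h2 : ({i, j} : Finset V).card = 2 := Finset.card_pair hne
      rw [h2] at this
      exact_mod_cast this
    have hA : (4 * totalW E w + 2) / ((vWinners s (s i).1).card : ℝ)
        ≤ (4 * totalW E w + 2) / 2 :=
      div_le_div_of_nonneg_left (by linarith) (by norm_num) hcard2
    have hB : ∑ e ∈ E, ∑ side : Bool,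
        (if i ∈ eWinners s e side then w e / ((eWinners s e side).card : ℝ) else 0)
        ≤ 2 * totalW E w := by
      have : 2 * totalW E w = ∑ e ∈ E, 2 * w e := by
        rw [totalW, Finset.mul_sum]
      rw [this]
      refine Finset.sum_le_sum fun e he => ?_
      have hterm : ∀ side : Bool,
          (if i ∈ eWinners s e side then w e / ((eWinners s e side).card : ℝ) else 0)
          ≤ w e := by
        intro side
        split
        · rename_i hi
          have hpos : (1:ℝ) ≤ ((eWinners s e side).card : ℝ) := by
            have : 1 ≤ (eWinners s e side).card := Finset.card_pos.mpr ⟨i, hi⟩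
            exact_mod_cast this
          exact div_le_self (hw e he).le hpos
        · exact (hw e he).le
      calc ∑ side : Bool, (if i ∈ eWinners s e side then
              w e / ((eWinners s e side).card : ℝ) else 0)
          ≤ ∑ _side : Bool, w e := Finset.sum_le_sum fun side _ => hterm side
        _ = 2 * w e := by simp [two_mul]
    have hup : mcUtil E w s i ≤ (4 * totalW E w + 2) / 2 + 2 * totalW E w := by
      rw [mcUtil]
      linarith
    have := hNE i (u, true)
    rw [← hs'] at this
    linarith
  exact Finite.injective_iff_bijective.mp hinj

end MaxCutGame
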